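/- arXiv:1209.3475 — 6 statements merged into one kernel-verified Lean document; each statement's English description precedes it below -/
import Mathlib

section
/- Let (X, X⁺) be a normally ordered Banach space with monotonic norm (0 ≤ u ≤ v implies ‖u‖ ≤ ‖v‖). Then for any comparable u, v ∈ X⁺ with ‖u‖ = ‖v‖ = 1, one has ‖u − v‖ ≤ 3(e^{d(u,v)} − 1). -/
open scoped Topology
open Filter

variable {X : Type*} [NormedAddCommGroup X] [NormedSpace ℝ X]

/-- `x ≤ y` with respect to the cone `C`. -/
def coneLe (C : Set X) (x y : X) : Prop := y - x ∈ C

/-- `C` is a cone: closed, convex, closed under nonnegative scaling, and pointed. -/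
def IsPaperCone (C : Set X) : Prop :=
  IsClosed C ∧ Convex ℝ C ∧ (∀ (a : ℝ) (u : X), 0 ≤ a → u ∈ C → a • u ∈ C) ∧
    (∀ u : X, u ∈ C → -u ∈ C → u = 0)

/-- `u` and `v` are comparable: `α • v ≤ u ≤ β • v` for some positive `α`, `β`. -/
def comparable (C : Set X) (u v : X) : Prop :=
  ∃ α β : ℝ, 0 < α ∧ 0 < β ∧ coneLe C (α • v) u ∧ coneLe C u (β • v)

/-- `m(u/v) = sup {α : α • v ≤ u}`. -/
noncomputable def mRatio (C : Set X) (u v : X) : ℝ := sSup {α : ℝ | coneLe C (α • v) u}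

/-- `M(u/v) = inf {α : u ≤ α • v}`. -/
noncomputable def MRatio (C : Set X) (u v : X) : ℝ := sInf {α : ℝ | coneLe C u (α • v)}

/-- The projective (Hilbert) distance `d(u,v) = ln (M(u/v)/m(u/v))`. -/
noncomputable def projDist (C : Set X) (u v : X) : ℝ :=
  Real.log (MRatio C u v / mRatio C u v)

/-- The oscillation `osc(u/v) = M(u/v) - m(u/v)`. -/
noncomputable def oscR (C : Set X) (u v : X) : ℝ := MRatio C u v - mRatio C u v

/-- norm estimate via the projective distance in a normally
ordered Banach space with monotonic norm. -/
theorem norm_sub_le_of_projDist (C : Set X) (hC : IsPaperCone C)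
    (hmono : ∀ x y : X, x ∈ C → coneLe C x y → ‖x‖ ≤ ‖y‖)
    {u v : X} (hu : u ∈ C) (hv : v ∈ C) (huv : comparable C u v)
    (hnu : ‖u‖ = 1) (hnv : ‖v‖ = 1) :
    ‖u - v‖ ≤ 3 * (Real.exp (projDist C u v) - 1) := by

  obtain ⟨hCclosed, hCconv, hCsmul, hCpointed⟩ := hC
  obtain ⟨α, β, hα, hβ, h1, h2⟩ := huv
  have hvne : v ≠ 0 := by intro h; rw [h, norm_zero] at hnv; norm_num at hnv
  have hadd : ∀ x y : X, x ∈ C → y ∈ C → x + y ∈ C := by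
    intro x y hx hy
    have h := hCconv hx hy (by norm_num : (0:ℝ) ≤ 1/2) (by norm_num : (0:ℝ) ≤ 1/2) (by norm_num)
    have h2 := hCsmul 2 _ (by norm_num) h
    have : (2:ℝ) • ((1/2:ℝ) • x + (1/2:ℝ) • y) = x + y := by
      rw [smul_add, smul_smul, smul_smul]; norm_num
    rwa [this] at h2
  set S : Set ℝ := {a : ℝ | coneLe C (a • v) u} with hS
  set T : Set ℝ := {a : ℝ | coneLe C u (a • v)} with hT
  have hkey : ∀ a ∈ S, ∀ b ∈ T, a ≤ b := by
    intro a ha b hb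
    by_contra hab
    push_neg at hab
    have hsum : (b - a) • v ∈ C := by
      have := hadd _ _ hb ha
      have e : (b • v - u) + (u - a • v) = (b - a) • v := by
        rw [sub_smul]; abel
      rwa [e] at this
    have hneg : (a - b) • v ∈ C := hCsmul _ _ (by linarith) hv
    have : (b - a) • v = 0 := hCpointed _ hsum (by rwa [← neg_smul, neg_sub])
    rcases smul_eq_zero.mp this with h | h
    · linarith
    · exact hvne h
  have hSne : S.Nonempty := ⟨α, h1⟩
  have hTne : T.Nonempty := ⟨β, h2⟩
  have hSbdd : BddAbove S := ⟨β, fun a ha => hkey a ha β h2⟩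
  have hTbdd : BddBelow T := ⟨α, fun b hb => hkey α h1 b hb⟩
  have hSclosed : IsClosed S := by
    have : S = (fun a : ℝ => u - a • v) ⁻¹' C := rfl
    rw [this]
    exact hCclosed.preimage (continuous_const.sub (continuous_id.smul continuous_const))
  have hTclosed : IsClosed T := by
    have : T = (fun a : ℝ => a • v - u) ⁻¹' C := rfl
    rw [this]
    exact hCclosed.preimage ((continuous_id.smul continuous_const).sub continuous_const)
  have hmS : sSup S ∈ S := hSclosed.csSup_mem hSne hSbdd
  have hMT : sInf T ∈ T := hTclosed.csInf_mem hTne hTbdd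
  set m := sSup S with hm
  set M := sInf T with hM
  have hmM : m ≤ M := hkey m hmS M hMT
  have hmpos : 0 < m := lt_of_lt_of_le hα (le_csSup hSbdd h1)
  -- m • v ≤ u, u ≤ M • v
  have hmv : u - m • v ∈ C := hmS
  have hMv : M • v - u ∈ C := hMT
  have hmvC : m • v ∈ C := hCsmul _ _ hmpos.le hv
  -- M ≥ 1
  have hM1 : 1 ≤ M := by
    have := hmono u (M • v) hu hMv
    rw [hnu, norm_smul, hnv, Real.norm_eq_abs, abs_of_pos (lt_of_lt_of_le hmpos hmM)] at this
    linarith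
  -- m ≤ 1
  have hm1 : m ≤ 1 := by
    have := hmono (m • v) u hmvC hmv
    rw [hnu, norm_smul, hnv, Real.norm_eq_abs, abs_of_pos hmpos] at this
    linarith
  -- ‖u - m•v‖ ≤ M - m
  have hkey2 : ‖u - m • v‖ ≤ M - m := by
    have hc : coneLe C (u - m • v) ((M - m) • v) := by
      show (M - m) • v - (u - m • v) ∈ C
      have e : (M - m) • v - (u - m • v) = M • v - u := by rw [sub_smul]; abel
      rw [e]; exact hMv
    have := hmono _ _ hmv hc
    rw [norm_smul, hnv, Real.norm_eq_abs, abs_of_nonneg (by linarith)] at this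
    linarith
  have hsplit : ‖u - v‖ ≤ (M - m) + (1 - m) := by
    have e : u - v = (u - m • v) + (m - 1) • v := by
      rw [sub_smul, one_smul]; abel
    rw [e]
    calc ‖(u - m • v) + (m - 1) • v‖ ≤ ‖u - m • v‖ + ‖(m - 1) • v‖ := norm_add_le _ _
      _ ≤ (M - m) + (1 - m) := by
          rw [norm_smul, hnv, Real.norm_eq_abs, abs_of_nonpos (by linarith)]
          linarith
  have hexp : Real.exp (projDist C u v) = M / m := by
    rw [projDist, Real.exp_log]
    · rfl
    · exact div_pos (lt_of_lt_of_le hmpos hmM) hmpos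
  rw [hexp]
  rw [div_sub_one hmpos.ne']
  have h3 : M - m ≤ (M - m) / m := by
    rw [le_div_iff₀ hmpos]; nlinarith
  nlinarith
end

section
/- Let (X, X⁺) be a Banach lattice with lattice norm. Then for any comparable u, v ∈ X⁺ with ‖u‖ = ‖v‖ = 1, one has ‖u − v‖ ≤ e^{d(u,v)} − 1. -/
open scoped Topology
open Filter

variable {X : Type*} [NormedAddCommGroup X] [Lattice X] [HasSolidNorm X] [IsOrderedAddMonoid X]
  [NormedSpace ℝ X] [PosSMulStrictMono ℝ X] [PosSMulReflectLT ℝ X]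
  [CompleteSpace X]

/-- `m(u/v) = sup {α : α • v ≤ u}` in a Banach lattice. -/
noncomputable def mLat (u v : X) : ℝ := sSup {α : ℝ | α • v ≤ u}

/-- `M(u/v) = inf {α : u ≤ α • v}` in a Banach lattice. -/
noncomputable def MLat (u v : X) : ℝ := sInf {α : ℝ | u ≤ α • v}

/-- The projective distance in a Banach lattice. -/
noncomputable def dLat (u v : X) : ℝ := Real.log (MLat u v / mLat u v)

/-!
The extremal constants are attained, so `m • v ≤ u ≤ M • v`, whence
`|u - v| ≤ max (M - 1) (1 - m) • v`. Solidity of the norm turns this into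
`‖u - v‖ ≤ max (M - 1) (1 - m)`, and it also gives `m ≤ 1 ≤ M` since `‖u‖ = ‖v‖`.
For `0 < m ≤ 1 ≤ M` both `M - 1` and `1 - m` are at most `M / m - 1 = e^{d(u,v)} - 1`.
-/

section OrderClosed

variable {E : Type*} [TopologicalSpace E] [Preorder E] [OrderClosedTopology E] [SMul ℝ E]
  [ContinuousSMul ℝ E]

theorem isClosed_setOf_smul_le (u v : E) : IsClosed {a : ℝ | a • v ≤ u} :=
  isClosed_le (continuous_id.smul continuous_const) continuous_const

theorem isClosed_setOf_le_smul (u v : E) : IsClosed {b : ℝ | u ≤ b • v} :=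
  isClosed_le continuous_const (continuous_id.smul continuous_const)

end OrderClosed

section OrderedModule

variable {E : Type*} [AddCommGroup E] [PartialOrder E] [IsOrderedAddMonoid E] [Module ℝ E]
  [PosSMulStrictMono ℝ E] {u v : E} {a b : ℝ}

theorem le_of_smul_le_of_le_smul (hv : 0 < v) (ha : a • v ≤ u) (hb : u ≤ b • v) : a ≤ b :=
  (smul_le_smul_iff_of_pos_right hv).1 (ha.trans hb)

theorem bddAbove_setOf_smul_le (hv : 0 < v) (hb : u ≤ b • v) : BddAbove {a : ℝ | a • v ≤ u} :=
  ⟨b, fun _ ha ↦ le_of_smul_le_of_le_smul hv ha hb⟩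

theorem bddBelow_setOf_le_smul (hv : 0 < v) (ha : a • v ≤ u) : BddBelow {b : ℝ | u ≤ b • v} :=
  ⟨a, fun _ hb ↦ le_of_smul_le_of_le_smul hv ha hb⟩

variable [TopologicalSpace E] [OrderClosedTopology E] [ContinuousSMul ℝ E]

theorem sSup_setOf_smul_le_smul_le (hv : 0 < v) (ha : a • v ≤ u) (hb : u ≤ b • v) :
    sSup {a : ℝ | a • v ≤ u} • v ≤ u :=
  (isClosed_setOf_smul_le u v).csSup_mem ⟨a, ha⟩ (bddAbove_setOf_smul_le hv hb)

theorem le_sInf_setOf_le_smul_smul (hv : 0 < v) (ha : a • v ≤ u) (hb : u ≤ b • v) :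
    u ≤ sInf {b : ℝ | u ≤ b • v} • v :=
  (isClosed_setOf_le_smul u v).csInf_mem ⟨b, hb⟩ (bddBelow_setOf_le_smul hv ha)

end OrderedModule

section SolidNorm

variable {E : Type*} [NormedAddCommGroup E] [Lattice E] [HasSolidNorm E] [IsOrderedAddMonoid E]

theorem norm_le_norm_of_nonneg_of_le {u w : E} (hu : 0 ≤ u) (h : u ≤ w) : ‖u‖ ≤ ‖w‖ :=
  norm_le_norm_of_abs_le_abs <| by rwa [abs_of_nonneg hu, abs_of_nonneg (hu.trans h)]

variable [NormedSpace ℝ E]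

theorem norm_le_mul_norm_of_le_smul {u v : E} {b : ℝ} (hb : 0 ≤ b) (hu : 0 ≤ u)
    (h : u ≤ b • v) : ‖u‖ ≤ b * ‖v‖ := by
  simpa [norm_smul, abs_of_nonneg hb] using norm_le_norm_of_nonneg_of_le hu h

variable [PosSMulMono ℝ E]

theorem mul_norm_le_norm_of_smul_le {u v : E} {a : ℝ} (ha : 0 ≤ a) (hv : 0 ≤ v)
    (h : a • v ≤ u) : a * ‖v‖ ≤ ‖u‖ := by
  simpa [norm_smul, abs_of_nonneg ha] using norm_le_norm_of_nonneg_of_le (smul_nonneg ha hv) h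

theorem norm_sub_le_of_smul_le_of_le_smul {u v : E} {a b : ℝ} (hv : 0 ≤ v) (hab : a ≤ b)
    (ha : a • v ≤ u) (hb : u ≤ b • v) : ‖u - v‖ ≤ max (b - 1) (1 - a) * ‖v‖ := by
  set c := max (b - 1) (1 - a)
  have hc : 0 ≤ c := by
    rcases le_total a 1 with h | h
    · exact le_max_of_le_right (sub_nonneg.2 h)
    · exact le_max_of_le_left (sub_nonneg.2 (h.trans hab))
  have upper : u - v ≤ c • v :=
    calc u - v ≤ (b - 1) • v := by rw [sub_smul, one_smul]; exact sub_le_sub_right hb v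
      _ ≤ c • v := smul_le_smul_of_nonneg_right (le_max_left _ _) hv
  have lower : v - u ≤ c • v :=
    calc v - u ≤ (1 - a) • v := by rw [sub_smul, one_smul]; exact sub_le_sub_left ha v
      _ ≤ c • v := smul_le_smul_of_nonneg_right (le_max_right _ _) hv
  have habs : |u - v| ≤ c • v := abs_le'.2 ⟨upper, by rwa [neg_sub]⟩
  simpa [norm_smul, abs_of_nonneg hc] using
    norm_le_norm_of_abs_le_abs (habs.trans (le_abs_self _))

end SolidNorm

theorem max_sub_one_le_div_sub_one {m M : ℝ} (hm : 0 < m) (hm1 : m ≤ 1) (hM1 : 1 ≤ M) :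
    max (M - 1) (1 - m) ≤ M / m - 1 := by
  refine max_le ?_ ?_ <;> rw [le_sub_iff_add_le, le_div_iff₀ hm] <;>
    nlinarith [sq_nonneg (1 - m)]

theorem norm_sub_le_exp_dLat_general {u v : X} (hu : 0 ≤ u) (hv : 0 ≤ v)
    (hv0 : v ≠ 0)
    (huv : ∃ α β : ℝ, 0 < α ∧ 0 < β ∧ α • v ≤ u ∧ u ≤ β • v)
    (hnu : ‖u‖ = 1) (hnv : ‖v‖ = 1) :
    ‖u - v‖ ≤ Real.exp (dLat u v) - 1 := by
  obtain ⟨α, β, hα, -, hαv, hβv⟩ := huv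
  have hvpos : 0 < v := hv.lt_of_ne' hv0
  set m := mLat u v
  set M := MLat u v
  have hmv : m • v ≤ u := sSup_setOf_smul_le_smul_le hvpos hαv hβv
  have hMv : u ≤ M • v := le_sInf_setOf_le_smul_smul hvpos hαv hβv
  have hmM : m ≤ M := le_of_smul_le_of_le_smul hvpos hmv hMv
  have hm : 0 < m := hα.trans_le (le_csSup (bddAbove_setOf_smul_le hvpos hβv) hαv)
  have hm1 : m ≤ 1 := by
    simpa [hnu, hnv] using mul_norm_le_norm_of_smul_le hm.le hv hmv
  have hM1 : 1 ≤ M := by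
    simpa [hnu, hnv] using norm_le_mul_norm_of_le_smul (hm.le.trans hmM) hu hMv
  calc ‖u - v‖ ≤ max (M - 1) (1 - m) * ‖v‖ :=
        norm_sub_le_of_smul_le_of_le_smul hv hmM hmv hMv
    _ ≤ M / m - 1 := by rw [hnv, mul_one]; exact max_sub_one_le_div_sub_one hm hm1 hM1
    _ = Real.exp (dLat u v) - 1 := by rw [dLat, Real.exp_log (div_pos (hm.trans_le hmM) hm)]

/-- in a Banach lattice, `‖u - v‖ ≤ e^{d(u,v)} - 1` for comparable
unit vectors of the positive cone. -/
theorem norm_sub_le_exp_dLat {u v : X} (hu : 0 ≤ u) (hv : 0 ≤ v)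
    (hu0 : u ≠ 0) (hv0 : v ≠ 0)
    (huv : ∃ α β : ℝ, 0 < α ∧ 0 < β ∧ α • v ≤ u ∧ u ≤ β • v)
    (hnu : ‖u‖ = 1) (hnv : ‖v‖ = 1) :
    ‖u - v‖ ≤ Real.exp (dLat u v) - 1 :=
  norm_sub_le_exp_dLat_general hu hv hv0 huv hnu hnv
end

section
/- Lower semicontinuity of the projective distance: suppose u, v, u_k, v_k ∈ X⁺ \ {0} for k = 1, 2, …, with u_k comparable to v_k for each k, the sequences (1/m(u_k/v_k)) and (M(u_k/v_k)) bounded, and u_k → u, v_k → v in norm. Then u is comparable to v and d(u,v) ≤ liminf_{k→∞} d(u_k, v_k). -/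
open scoped Topology
open Filter

variable {X : Type*} [NormedAddCommGroup X] [NormedSpace ℝ X]

lemma cone_add_mem {C : Set X} (hC : IsPaperCone C) {x y : X} (hx : x ∈ C) (hy : y ∈ C) :
    x + y ∈ C := by
  obtain ⟨_, hconv, hscale, _⟩ := hC
  have h := hconv hx hy (by norm_num : (0:ℝ) ≤ 1/2) (by norm_num : (0:ℝ) ≤ 1/2) (by norm_num)
  have h2 := hscale 2 _ (by norm_num) h
  rwa [smul_add, smul_smul, smul_smul, show (2:ℝ) * (1/2) = 1 by norm_num, one_smul,
    one_smul] at h2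

lemma cone_smul_nonneg {C : Set X} (hC : IsPaperCone C) {v : X} (hv : v ∈ C) (hv0 : v ≠ 0)
    {t : ℝ} (ht : t • v ∈ C) : 0 ≤ t := by
  by_contra h
  push_neg at h
  have h1 : -(t • v) ∈ C := by
    rw [← neg_smul]; exact hC.2.2.1 (-t) v (by linarith) hv
  have h2 := hC.2.2.2 _ ht h1
  rcases smul_eq_zero.mp h2 with h3 | h3
  · exact absurd h3 (ne_of_lt h)
  · exact hv0 h3

lemma ratio_le {C : Set X} (hC : IsPaperCone C) {u v : X} (hv : v ∈ C) (hv0 : v ≠ 0)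
    {α β : ℝ} (h1 : coneLe C (α • v) u) (h2 : coneLe C u (β • v)) : α ≤ β := by
  have h3 : (β - α) • v ∈ C := by
    have := cone_add_mem hC h2 h1
    rwa [show β • v - u + (u - α • v) = (β - α) • v by rw [sub_smul]; abel] at this
  linarith [cone_smul_nonneg hC hv hv0 h3]

lemma isClosed_mset {C : Set X} (hC : IsPaperCone C) (u v : X) :
    IsClosed {α : ℝ | coneLe C (α • v) u} := by
  have : {α : ℝ | coneLe C (α • v) u} = (fun α : ℝ => u - α • v) ⁻¹' C := rfl
  rw [this]
  exact hC.1.preimage (continuous_const.sub (continuous_id.smul continuous_const))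

lemma isClosed_Mset {C : Set X} (hC : IsPaperCone C) (u v : X) :
    IsClosed {α : ℝ | coneLe C u (α • v)} := by
  have : {α : ℝ | coneLe C u (α • v)} = (fun α : ℝ => α • v - u) ⁻¹' C := rfl
  rw [this]
  exact hC.1.preimage ((continuous_id.smul continuous_const).sub continuous_const)

lemma key {C : Set X} (hC : IsPaperCone C) {u v : X} (hv : v ∈ C) (hv0 : v ≠ 0)
    (hcomp : comparable C u v) :
    0 < mRatio C u v ∧ mRatio C u v ≤ MRatio C u v ∧
      coneLe C (mRatio C u v • v) u ∧ coneLe C u (MRatio C u v • v) := by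
  obtain ⟨α, β, hα, hβ, h1, h2⟩ := hcomp
  have hne : ({α : ℝ | coneLe C (α • v) u}).Nonempty := ⟨α, h1⟩
  have hbdd : BddAbove {α : ℝ | coneLe C (α • v) u} :=
    ⟨β, fun x hx => ratio_le hC hv hv0 hx h2⟩
  have hmem : mRatio C u v ∈ {α : ℝ | coneLe C (α • v) u} :=
    (isClosed_mset hC u v).csSup_mem hne hbdd
  have hne' : ({α : ℝ | coneLe C u (α • v)}).Nonempty := ⟨β, h2⟩
  have hbdd' : BddBelow {α : ℝ | coneLe C u (α • v)} :=
    ⟨α, fun x hx => ratio_le hC hv hv0 h1 hx⟩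
  have hmem' : MRatio C u v ∈ {α : ℝ | coneLe C u (α • v)} :=
    (isClosed_Mset hC u v).csInf_mem hne' hbdd'
  refine ⟨lt_of_lt_of_le hα (le_csSup hbdd h1), ratio_le hC hv hv0 hmem hmem', hmem, hmem'⟩

lemma mRatio_ge {C : Set X} (hC : IsPaperCone C) {u v : X} (hv : v ∈ C) (hv0 : v ≠ 0)
    (hcomp : comparable C u v) {γ : ℝ} (h : coneLe C (γ • v) u) : γ ≤ mRatio C u v := by
  obtain ⟨α, β, hα, hβ, h1, h2⟩ := hcomp
  exact le_csSup ⟨β, fun x hx => ratio_le hC hv hv0 hx h2⟩ h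

lemma MRatio_le {C : Set X} (hC : IsPaperCone C) {u v : X} (hv : v ∈ C) (hv0 : v ≠ 0)
    (hcomp : comparable C u v) {γ : ℝ} (h : coneLe C u (γ • v)) : MRatio C u v ≤ γ := by
  obtain ⟨α, β, hα, hβ, h1, h2⟩ := hcomp
  exact csInf_le ⟨α, fun x hx => ratio_le hC hv hv0 h1 hx⟩ h

/-- lower semicontinuity of the projective distance. -/
theorem projDist_lower_semicontinuous (C : Set X) (hC : IsPaperCone C)
    (u v : ℕ → X) (U V : X)
    (hU : U ∈ C) (hU0 : U ≠ 0) (hV : V ∈ C) (hV0 : V ≠ 0)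
    (hu : ∀ k, u k ∈ C) (hu0 : ∀ k, u k ≠ 0)
    (hv : ∀ k, v k ∈ C) (hv0 : ∀ k, v k ≠ 0)
    (hcomp : ∀ k, comparable C (u k) (v k))
    (hbdd : ∃ B : ℝ, ∀ k, 1 / mRatio C (u k) (v k) ≤ B ∧ MRatio C (u k) (v k) ≤ B)
    (huU : Filter.Tendsto u Filter.atTop (nhds U))
    (hvV : Filter.Tendsto v Filter.atTop (nhds V)) :
    comparable C U V ∧
      projDist C U V ≤ Filter.liminf (fun k => projDist C (u k) (v k)) Filter.atTop := by
  obtain ⟨B, hB⟩ := hbdd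
  set m : ℕ → ℝ := fun k => mRatio C (u k) (v k) with hm_def
  set M : ℕ → ℝ := fun k => MRatio C (u k) (v k) with hM_def
  have hkey : ∀ k, 0 < m k ∧ m k ≤ M k ∧
      coneLe C (m k • v k) (u k) ∧ coneLe C (u k) (M k • v k) :=
    fun k => key hC (hv k) (hv0 k) (hcomp k)
  have hBpos : 0 < B := by
    have hm0 := (hkey 0).1
    have h0 : 0 < 1 / m 0 := by positivity
    exact lt_of_lt_of_le h0 (hB 0).1
  have hmlb : ∀ k, 1 / B ≤ m k := fun k =>
    (one_div_le (hkey k).1 hBpos).mp (hB k).1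
  have hMub : ∀ k, M k ≤ B := fun k => (hB k).2
  have hmem : ∀ k, m k ∈ Set.Icc (1 / B) B :=
    fun k => ⟨hmlb k, le_trans (hkey k).2.1 (hMub k)⟩
  have hMem : ∀ k, M k ∈ Set.Icc (1 / B) B :=
    fun k => ⟨le_trans (hmlb k) (hkey k).2.1, hMub k⟩
  have hBinvpos : 0 < 1 / B := by positivity
  -- extraction
  have extraction : ∀ φ : ℕ → ℕ, StrictMono φ → ∃ ms Ms : ℝ, ∃ ψ : ℕ → ℕ, StrictMono ψ ∧
      1 / B ≤ ms ∧ ms ≤ Ms ∧ coneLe C (ms • V) U ∧ coneLe C U (Ms • V) ∧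
      Filter.Tendsto (fun k => Real.log (M (φ (ψ k)) / m (φ (ψ k)))) Filter.atTop
        (nhds (Real.log (Ms / ms))) := by
    intro φ hφ
    obtain ⟨ms, hmsIcc, ψ₁, hψ₁, hms⟩ :=
      isCompact_Icc.tendsto_subseq (fun k => hmem (φ k))
    obtain ⟨Ms, hMsIcc, ψ₂, hψ₂, hMs⟩ :=
      isCompact_Icc.tendsto_subseq (x := fun k => M (φ (ψ₁ k))) (fun k => hMem (φ (ψ₁ k)))
    set σ : ℕ → ℕ := fun k => φ (ψ₁ (ψ₂ k)) with hσdef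
    have hσ : StrictMono σ := hφ.comp (hψ₁.comp hψ₂)
    have hms' : Filter.Tendsto (fun k => m (σ k)) Filter.atTop (nhds ms) :=
      hms.comp hψ₂.tendsto_atTop
    have hMs' : Filter.Tendsto (fun k => M (σ k)) Filter.atTop (nhds Ms) := hMs
    have huσ : Filter.Tendsto (fun k => u (σ k)) Filter.atTop (nhds U) :=
      huU.comp hσ.tendsto_atTop
    have hvσ : Filter.Tendsto (fun k => v (σ k)) Filter.atTop (nhds V) :=
      hvV.comp hσ.tendsto_atTop
    have hmspos : 0 < ms := lt_of_lt_of_le hBinvpos hmsIcc.1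
    have hc1 : coneLe C (ms • V) U := by
      have ht : Filter.Tendsto (fun k => u (σ k) - m (σ k) • v (σ k)) Filter.atTop
          (nhds (U - ms • V)) := huσ.sub (hms'.smul hvσ)
      exact hC.1.mem_of_tendsto ht (Filter.Eventually.of_forall fun k => (hkey (σ k)).2.2.1)
    have hc2 : coneLe C U (Ms • V) := by
      have ht : Filter.Tendsto (fun k => M (σ k) • v (σ k) - u (σ k)) Filter.atTop
          (nhds (Ms • V - U)) := (hMs'.smul hvσ).sub huσ
      exact hC.1.mem_of_tendsto ht (Filter.Eventually.of_forall fun k => (hkey (σ k)).2.2.2)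
    refine ⟨ms, Ms, ψ₁ ∘ ψ₂, hψ₁.comp hψ₂, hmsIcc.1, ratio_le hC hV hV0 hc1 hc2, hc1, hc2, ?_⟩
    have hMspos : 0 < Ms := lt_of_lt_of_le hmspos (ratio_le hC hV hV0 hc1 hc2)
    have hdivpos : Ms / ms ≠ 0 := by positivity
    exact (hMs'.div hms' (ne_of_gt hmspos)).log hdivpos
  obtain ⟨ms, Ms, ψ, hψ, hms1, hmsMs, hc1, hc2, _⟩ := extraction id strictMono_id
  have hmspos : 0 < ms := lt_of_lt_of_le hBinvpos hms1
  have hcompUV : comparable C U V := ⟨ms, Ms, hmspos, lt_of_lt_of_le hmspos hmsMs, hc1, hc2⟩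
  refine ⟨hcompUV, ?_⟩
  have hkeyUV := key hC hV hV0 hcompUV
  by_contra hcon
  push_neg at hcon
  set L := Filter.liminf (fun k => projDist C (u k) (v k)) Filter.atTop with hLdef
  have hdnn : ∀ k, 0 ≤ projDist C (u k) (v k) := fun k =>
    Real.log_nonneg ((one_le_div (hkey k).1).mpr (hkey k).2.1)
  have hdub : ∀ k, projDist C (u k) (v k) ≤ Real.log (B / (1 / B)) := by
    intro k
    have h1 := (hkey k).1
    have h2 : 0 < M k := lt_of_lt_of_le h1 (hkey k).2.1
    have hdiv : M k / m k ≤ B / (1 / B) :=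
      div_le_div₀ (le_of_lt hBpos) (hMub k) hBinvpos (hmlb k)
    exact Real.log_le_log (by positivity) hdiv
  have hfreq : ∃ᶠ k in Filter.atTop, projDist C (u k) (v k) < (L + projDist C U V) / 2 := by
    apply Filter.frequently_lt_of_liminf_lt
    · exact (Filter.isBoundedUnder_of ⟨Real.log (B / (1 / B)), hdub⟩).isCoboundedUnder_ge
    · rw [← hLdef]; linarith
  obtain ⟨φ, hφ, hφlt⟩ := Filter.extraction_of_frequently_atTop hfreq
  obtain ⟨ms', Ms', ψ', hψ', hms1', hmsMs', hc1', hc2', htend⟩ := extraction φ hφ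
  have hmspos' : 0 < ms' := lt_of_lt_of_le hBinvpos hms1'
  have hlim_le : Real.log (Ms' / ms') ≤ (L + projDist C U V) / 2 :=
    le_of_tendsto htend (Filter.Eventually.of_forall fun k => le_of_lt (hφlt (ψ' k)))
  have h1 : projDist C U V ≤ Real.log (Ms' / ms') := by
    have hmge : ms' ≤ mRatio C U V := mRatio_ge hC hV hV0 hcompUV hc1'
    have hMle : MRatio C U V ≤ Ms' := MRatio_le hC hV hV0 hcompUV hc2'
    have hdiv : MRatio C U V / mRatio C U V ≤ Ms' / ms' := by
      apply div_le_div₀ (le_of_lt (lt_of_lt_of_le hmspos' hmsMs')) hMle hmspos' hmge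
    have hpos : 0 < MRatio C U V / mRatio C U V := by
      have h1 := hkeyUV.1
      have h2 : 0 < MRatio C U V := lt_of_lt_of_le h1 hkeyUV.2.1
      positivity
    exact Real.log_le_log hpos hdiv
  linarith
end

section
/- Strict contraction of m and M under focusing: let T : X → X be a positive bounded linear operator with the focusing property (there exist e ∈ X⁺, ‖e‖ = 1, and κ ≥ 1 such that for every nonzero u ∈ X⁺ there is β(u) > 0 with β(u)e ≤ Tu ≤ κβ(u)e). If u, v ∈ X⁺ \ {0} are comparable and v ≠ αu for every α > 0, then m(Tu/Tv) > m(u/v) and M(Tu/Tv) < M(u/v). -/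
open scoped Topology
open Filter

variable {X : Type*} [NormedAddCommGroup X] [NormedSpace ℝ X]

lemma IsPaperCone.add' {C : Set X} (hC : IsPaperCone C) {a b : X}
    (ha : a ∈ C) (hb : b ∈ C) : a + b ∈ C := by
  have h := hC.2.1 ha hb (by norm_num : (0:ℝ) ≤ 1/2) (by norm_num : (0:ℝ) ≤ 1/2) (by norm_num)
  have h2 := hC.2.2.1 2 _ (by norm_num) h
  have e : (2:ℝ) • ((1/2:ℝ) • a + (1/2:ℝ) • b) = a + b := by module
  rwa [e] at h2

lemma IsPaperCone.coeff_nonneg {C : Set X} (hC : IsPaperCone C) {x : X}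
    (hx : x ∈ C) (hx0 : x ≠ 0) {c : ℝ} (hc : c • x ∈ C) : 0 ≤ c := by
  by_contra h
  push_neg at h
  have h2 : (-c) • x ∈ C := hC.2.2.1 (-c) x (by linarith) hx
  rw [neg_smul] at h2
  have h3 := hC.2.2.2 _ hc h2
  rcases smul_eq_zero.mp h3 with h4 | h4
  · exact absurd h4 (by linarith)
  · exact hx0 h4

/-- strict contraction of m and M under a focusing positive
operator, for comparable but non-proportional cone elements. -/
theorem focusing_strict_contraction (C : Set X) (hC : IsPaperCone C)
    (T : X →L[ℝ] X) (hT : ∀ x ∈ C, T x ∈ C)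
    (e : X) (he : e ∈ C) (hne : ‖e‖ = 1) (κ : ℝ) (hκ : 1 ≤ κ)
    (hfoc : ∀ u : X, u ∈ C → u ≠ 0 →
      ∃ β : ℝ, 0 < β ∧ coneLe C (β • e) (T u) ∧ coneLe C (T u) ((κ * β) • e))
    {u v : X} (hu : u ∈ C) (hu0 : u ≠ 0) (hv : v ∈ C) (hv0 : v ≠ 0)
    (huv : comparable C u v) (hnp : ∀ α : ℝ, 0 < α → v ≠ α • u) :
    mRatio C u v < mRatio C (T u) (T v) ∧ MRatio C (T u) (T v) < MRatio C u v := by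
  obtain ⟨α₀, β₀, hα₀, hβ₀, h1, h2⟩ := huv
  have h1' : u - α₀ • v ∈ C := h1
  have h2' : β₀ • v - u ∈ C := h2
  have he0 : e ≠ 0 := by intro h; rw [h] at hne; simp at hne
  have hκpos : (0:ℝ) < κ := lt_of_lt_of_le one_pos hκ
  -- the set for mRatio C u v
  set Sm : Set ℝ := {α : ℝ | coneLe C (α • v) u} with hSmdef
  set SM : Set ℝ := {α : ℝ | coneLe C u (α • v)} with hSMdef
  have hSm_ne : α₀ ∈ Sm := h1
  have hSM_ne : β₀ ∈ SM := h2
  have hSm_bdd : BddAbove Sm := by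
    refine ⟨β₀, fun α hα => ?_⟩
    have hα' : u - α • v ∈ C := hα
    have hadd := hC.add' hα' h2'
    have eq1 : (u - α • v) + (β₀ • v - u) = (β₀ - α) • v := by module
    rw [eq1] at hadd
    have := hC.coeff_nonneg hv hv0 hadd
    linarith
  have hSM_bdd : BddBelow SM := by
    refine ⟨α₀, fun α hα => ?_⟩
    have hα' : α • v - u ∈ C := hα
    have hadd := hC.add' hα' h1'
    have eq1 : (α • v - u) + (u - α₀ • v) = (α - α₀) • v := by module
    rw [eq1] at hadd
    have := hC.coeff_nonneg hv hv0 hadd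
    linarith
  have hSm_closed : IsClosed Sm := by
    have : Sm = (fun α : ℝ => u - α • v) ⁻¹' C := rfl
    rw [this]
    exact hC.1.preimage (by fun_prop)
  have hSM_closed : IsClosed SM := by
    have : SM = (fun α : ℝ => α • v - u) ⁻¹' C := rfl
    rw [this]
    exact hC.1.preimage (by fun_prop)
  set m : ℝ := mRatio C u v with hmdef
  set M : ℝ := MRatio C u v with hMdef
  have hm_mem : m ∈ Sm := hSm_closed.csSup_mem ⟨α₀, hSm_ne⟩ hSm_bdd
  have hM_mem : M ∈ SM := hSM_closed.csInf_mem ⟨β₀, hSM_ne⟩ hSM_bdd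
  have hm_ge : α₀ ≤ m := le_csSup hSm_bdd hSm_ne
  have hm_pos : 0 < m := lt_of_lt_of_le hα₀ hm_ge
  have hw : u - m • v ∈ C := hm_mem
  have hw' : M • v - u ∈ C := hM_mem
  have hMm : m ≤ M := by
    have hadd := hC.add' hw' hw
    have eq1 : (M • v - u) + (u - m • v) = (M - m) • v := by module
    rw [eq1] at hadd
    have := hC.coeff_nonneg hv hv0 hadd
    linarith
  have hM_pos : 0 < M := lt_of_lt_of_le hm_pos hMm
  have hw0 : u - m • v ≠ 0 := by
    intro h
    have hu_eq : u = m • v := by rwa [sub_eq_zero] at h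
    refine hnp m⁻¹ (by positivity) ?_
    rw [hu_eq, smul_smul, inv_mul_cancel₀ hm_pos.ne', one_smul]
  have hw'0 : M • v - u ≠ 0 := by
    intro h
    have hu_eq : u = M • v := by
      have := sub_eq_zero.mp h; exact this.symm
    refine hnp M⁻¹ (by positivity) ?_
    rw [hu_eq, smul_smul, inv_mul_cancel₀ hM_pos.ne', one_smul]
  obtain ⟨bu, hbu, hbu1, hbu2⟩ := hfoc u hu hu0
  obtain ⟨bv, hbv, hbv1, hbv2⟩ := hfoc v hv hv0
  obtain ⟨bw, hbw, hbw1, -⟩ := hfoc (u - m • v) hw hw0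
  obtain ⟨bw', hbw', hbw'1, -⟩ := hfoc (M • v - u) hw' hw'0
  have hbu1' : T u - bu • e ∈ C := hbu1
  have hbu2' : (κ * bu) • e - T u ∈ C := hbu2
  have hbv1' : T v - bv • e ∈ C := hbv1
  have hbv2' : (κ * bv) • e - T v ∈ C := hbv2
  have hbw1' : T (u - m • v) - bw • e ∈ C := hbw1
  have hbw'1' : T (M • v - u) - bw' • e ∈ C := hbw'1
  have hTv0 : T v ≠ 0 := by
    intro h
    have ha : bv • e ∈ C := hC.2.2.1 bv e hbv.le he
    have hb : -(bv • e) ∈ C := by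
      have := hbv1'
      rwa [h, zero_sub] at this
    have := hC.2.2.2 _ ha hb
    rcases smul_eq_zero.mp this with h4 | h4
    · exact hbv.ne' h4
    · exact he0 h4
  set Sm' : Set ℝ := {α : ℝ | coneLe C (α • T v) (T u)} with hSm'def
  set SM' : Set ℝ := {α : ℝ | coneLe C (T u) (α • T v)} with hSM'def
  have hκbv : (0:ℝ) < κ * bv := by positivity
  -- bounds for the image sets
  have hSm'_bdd : BddAbove Sm' := by
    refine ⟨κ * bu / bv, fun α hα => ?_⟩
    have hα' : T u - α • T v ∈ C := hα
    have hc' : (κ * bu / bv) * bv = κ * bu := div_mul_cancel₀ _ hbv.ne'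
    have ht1 : (κ * bu / bv) • (T v - bv • e) ∈ C :=
      hC.2.2.1 _ _ (by positivity) hbv1'
    have ht2 := hC.add' ht1 hbu2'
    have eqgen : ∀ δ : ℝ, δ * bv = κ * bu →
        δ • (T v - bv • e) + ((κ * bu) • e - T u) = δ • T v - T u := by
      intro δ hδc; rw [← hδc]; module
    have eq1 := eqgen _ hc'
    rw [eq1] at ht2
    have ht3 := hC.add' ht2 hα'
    have eq2 : ((κ * bu / bv) • T v - T u) + (T u - α • T v)
        = (κ * bu / bv - α) • T v := by module
    rw [eq2] at ht3
    have := hC.coeff_nonneg (hT v hv) hTv0 ht3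
    linarith
  have hSM'_bdd : BddBelow SM' := by
    refine ⟨bu / (κ * bv), fun α hα => ?_⟩
    have hα' : α • T v - T u ∈ C := hα
    have hc : (bu / (κ * bv)) * (κ * bv) = bu := div_mul_cancel₀ _ hκbv.ne'
    have ht1 : (bu / (κ * bv)) • ((κ * bv) • e - T v) ∈ C :=
      hC.2.2.1 _ _ (by positivity) hbv2'
    have ht2 := hC.add' hbu1' ht1
    have eqgen : ∀ δ : ℝ, δ * (κ * bv) = bu →
        (T u - bu • e) + δ • ((κ * bv) • e - T v) = T u - δ • T v := by
      intro δ hδc; rw [← hδc]; module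
    have eq1 := eqgen _ hc
    rw [eq1] at ht2
    have ht3 := hC.add' hα' ht2
    have eq2 : (α • T v - T u) + (T u - (bu / (κ * bv)) • T v)
        = (α - bu / (κ * bv)) • T v := by module
    rw [eq2] at ht3
    have := hC.coeff_nonneg (hT v hv) hTv0 ht3
    linarith
  -- key memberships
  have hδ : (0:ℝ) < bw / (κ * bv) := by positivity
  have hδ' : (0:ℝ) < bw' / (κ * bv) := by positivity
  have hmem1 : m + bw / (κ * bv) ∈ Sm' := by
    have hc : (bw / (κ * bv)) * (κ * bv) = bw := div_mul_cancel₀ _ hκbv.ne'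
    have ht1 : (bw / (κ * bv)) • ((κ * bv) • e - T v) ∈ C :=
      hC.2.2.1 _ _ (by positivity) hbv2'
    have ht2 := hC.add' hbw1' ht1
    have eqgen : ∀ δ : ℝ, δ * (κ * bv) = bw →
        (T (u - m • v) - bw • e) + δ • ((κ * bv) • e - T v)
          = T u - (m + δ) • T v := by
      intro δ hδc; rw [map_sub, map_smul, ← hδc]; module
    have eq1 := eqgen _ hc
    rw [eq1] at ht2
    exact ht2
  have hmem2 : M - bw' / (κ * bv) ∈ SM' := by
    have hc : (bw' / (κ * bv)) * (κ * bv) = bw' := div_mul_cancel₀ _ hκbv.ne'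
    have ht1 : (bw' / (κ * bv)) • ((κ * bv) • e - T v) ∈ C :=
      hC.2.2.1 _ _ (by positivity) hbv2'
    have ht2 := hC.add' hbw'1' ht1
    have eqgen : ∀ δ : ℝ, δ * (κ * bv) = bw' →
        (T (M • v - u) - bw' • e) + δ • ((κ * bv) • e - T v)
          = (M - δ) • T v - T u := by
      intro δ hδc; rw [map_sub, map_smul, ← hδc]; module
    have eq1 := eqgen _ hc
    rw [eq1] at ht2
    exact ht2
  constructor
  · calc m < m + bw / (κ * bv) := by linarith
      _ ≤ sSup Sm' := le_csSup hSm'_bdd hmem1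
  · calc sInf SM' ≤ M - bw' / (κ * bv) := csInf_le hSM'_bdd hmem2
      _ < M := by linarith
end

section
/- In an ordered Banach space, for comparable nonzero u, v ∈ X⁺, either m(u/v)·v < u < M(u/v)·v (strict inequalities, meaning the differences are nonzero elements of X⁺), or there exists α > 0 with v = αu. -/
open scoped Topology
open Filter

variable {X : Type*} [NormedAddCommGroup X] [NormedSpace ℝ X]

/-- for comparable nonzero cone elements, either the extremal
bounds are strict or the elements are proportional. -/
theorem strict_bounds_or_proportional (C : Set X) (hC : IsPaperCone C) {u v : X}
    (hu : u ∈ C) (hu0 : u ≠ 0) (hv : v ∈ C) (hv0 : v ≠ 0)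
    (huv : comparable C u v) :
    ((u - mRatio C u v • v ∈ C ∧ u - mRatio C u v • v ≠ 0) ∧
       (MRatio C u v • v - u ∈ C ∧ MRatio C u v • v - u ≠ 0)) ∨
      ∃ α : ℝ, 0 < α ∧ v = α • u := by
  obtain ⟨hclosed, hconv, hscale, hpoint⟩ := hC
  -- C is closed under addition
  have hadd : ∀ x ∈ C, ∀ y ∈ C, x + y ∈ C := by
    intro x hx y hy
    have h2 : (1/2 : ℝ) • x + (1/2 : ℝ) • y ∈ C :=
      hconv hx hy (by norm_num) (by norm_num) (by norm_num)
    have := hscale 2 _ (by norm_num) h2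
    rw [smul_add, smul_smul, smul_smul] at this
    norm_num at this
    exact this
  obtain ⟨α₀, β₀, hα₀, hβ₀, hlo, hhi⟩ := huv
  -- key order lemma
  have key : ∀ α β : ℝ, coneLe C (α • v) u → coneLe C u (β • v) → α ≤ β := by
    intro α β h1 h2
    by_contra h
    push_neg at h
    have hsum : (β - α) • v ∈ C := by
      have := hadd _ h1 _ h2
      have e : u - α • v + (β • v - u) = (β - α) • v := by
        rw [sub_smul]; abel
      rwa [e] at this
    have hneg : -((β - α) • v) ∈ C := by
      rw [← neg_smul, neg_sub]
      exact hscale _ _ (by linarith) hv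
    have := hpoint _ hsum hneg
    have : v = 0 := by
      have hne : (β - α) ≠ 0 := by linarith
      exact (smul_eq_zero.mp this).resolve_left hne
    exact hv0 this
  set S := {α : ℝ | coneLe C (α • v) u} with hS
  set T := {α : ℝ | coneLe C u (α • v)} with hT
  have hSne : S.Nonempty := ⟨α₀, hlo⟩
  have hTne : T.Nonempty := ⟨β₀, hhi⟩
  have hSbdd : BddAbove S := ⟨β₀, fun α hα => key α β₀ hα hhi⟩
  have hTbdd : BddBelow T := ⟨α₀, fun β hβ => key α₀ β hlo hβ⟩
  have hSclosed : IsClosed S := by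
    have : S = (fun α : ℝ => u - α • v) ⁻¹' C := rfl
    rw [this]
    exact hclosed.preimage (continuous_const.sub (continuous_id.smul continuous_const))
  have hTclosed : IsClosed T := by
    have : T = (fun α : ℝ => α • v - u) ⁻¹' C := rfl
    rw [this]
    exact hclosed.preimage ((continuous_id.smul continuous_const).sub continuous_const)
  have hmS : mRatio C u v ∈ S := hSclosed.csSup_mem hSne hSbdd
  have hMT : MRatio C u v ∈ T := hTclosed.csInf_mem hTne hTbdd
  have hmpos : 0 < mRatio C u v := lt_of_lt_of_le hα₀ (le_csSup hSbdd hlo)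
  have hMpos : 0 < MRatio C u v := lt_of_lt_of_le hmpos (key _ _ hmS hMT)
  set m := mRatio C u v with hm
  set M := MRatio C u v with hM
  by_cases h1 : u - m • v = 0
  · right
    refine ⟨m⁻¹, inv_pos.mpr hmpos, ?_⟩
    have heq : u = m • v := sub_eq_zero.mp h1
    rw [heq, smul_smul, inv_mul_cancel₀ hmpos.ne', one_smul]
  · by_cases h2 : M • v - u = 0
    · right
      refine ⟨M⁻¹, inv_pos.mpr hMpos, ?_⟩
      have heq : u = M • v := (sub_eq_zero.mp h2).symm
      rw [heq, smul_smul, inv_mul_cancel₀ hMpos.ne', one_smul]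
    · left
      exact ⟨⟨hmS, h1⟩, ⟨hMT, h2⟩⟩
end

section
/- Suppose E₁ is a finite-dimensional subspace of a Banach space X, F₁ a closed complement (E₁ ⊕ F₁ = X), P the projection onto F₁ along E₁, and X⁺ ⊆ X a total cone (X⁺ − X⁺ dense in X). Define δ := inf{ ‖Pu‖/‖u − Pu‖ : u ∈ X⁺ \ {0} }. Then δ = 0 if and only if E₁ ∩ X⁺ ⊋ {0}. -/
open scoped Topology
open Filter

variable {X : Type*} [NormedAddCommGroup X] [NormedSpace ℝ X]

/-- the infimum over the cone of the ratio of projections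
vanishes iff the finite-dimensional summand meets the cone nontrivially. -/
theorem delta_eq_zero_iff_meets_cone [CompleteSpace X]
    (C : Set X) (hC : IsPaperCone C)
    (htotal : closure {x : X | ∃ a ∈ C, ∃ b ∈ C, x = a - b} = Set.univ)
    (E F : Submodule ℝ X) [FiniteDimensional ℝ E] (hF : IsClosed (F : Set X))
    (hcompl : IsCompl E F)
    (Pr : X →L[ℝ] X) (hPF : ∀ x : X, Pr x ∈ F) (hPE : ∀ x : X, x - Pr x ∈ E)
    (hPid : ∀ x ∈ F, Pr x = x) :
    (⨅ (u : X) (_ : u ∈ C) (_ : u ≠ 0),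
        ENNReal.ofReal ‖Pr u‖ / ENNReal.ofReal ‖u - Pr u‖) = 0 ↔
      ∃ x : X, x ∈ E ∧ x ∈ C ∧ x ≠ 0 := by
  obtain ⟨hclosed, hconv, hscale, hpointed⟩ := hC
  constructor
  · intro h
    have key : ∀ n : ℕ, ∃ u, u ∈ C ∧ u ≠ 0 ∧ u - Pr u ≠ 0 ∧
        ‖Pr u‖ / ‖u - Pr u‖ < 1 / (n + 1) := by
      intro n
      have hlt : (⨅ (u : X) (_ : u ∈ C) (_ : u ≠ 0),
          ENNReal.ofReal ‖Pr u‖ / ENNReal.ofReal ‖u - Pr u‖)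
          < ENNReal.ofReal (1 / (n + 1)) := by
        rw [h]
        exact ENNReal.ofReal_pos.2 (by positivity)
      simp only [iInf_lt_iff] at hlt
      obtain ⟨u, hu, hune, hlt⟩ := hlt
      have hdne : u - Pr u ≠ 0 := by
        intro heq
        rw [heq] at hlt
        have hun : u = Pr u := by
          have := sub_eq_zero.mp heq; exact this
        have hnum : ENNReal.ofReal ‖Pr u‖ ≠ 0 := by
          simp only [ne_eq, ENNReal.ofReal_eq_zero, not_le]
          rw [← hun]
          exact norm_pos_iff.2 hune
        rw [norm_zero, ENNReal.ofReal_zero, ENNReal.div_zero hnum] at hlt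
        exact (not_top_lt hlt)
      have hbpos : 0 < ‖u - Pr u‖ := norm_pos_iff.2 hdne
      refine ⟨u, hu, hune, hdne, ?_⟩
      rw [← ENNReal.ofReal_div_of_pos hbpos] at hlt
      exact (ENNReal.ofReal_lt_ofReal_iff (by positivity)).mp hlt
    choose u hu1 hu2 hu3 hu4 using key
    set w : ℕ → X := fun n => (‖u n - Pr (u n)‖)⁻¹ • u n with hw
    have hwC : ∀ n, w n ∈ C := fun n =>
      hscale _ _ (inv_nonneg.2 (norm_nonneg _)) (hu1 n)
    have hwe : ∀ n, w n - Pr (w n) = (‖u n - Pr (u n)‖)⁻¹ • (u n - Pr (u n)) := by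
      intro n
      simp only [hw, map_smul, smul_sub]
    have hne : ∀ n, ‖w n - Pr (w n)‖ = 1 := by
      intro n
      rw [hwe n, norm_smul, norm_inv, norm_norm]
      exact inv_mul_cancel₀ (norm_pos_iff.2 (hu3 n)).ne'
    have hnP : ∀ n, ‖Pr (w n)‖ < 1 / (n + 1) := by
      intro n
      have hPw : Pr (w n) = (‖u n - Pr (u n)‖)⁻¹ • Pr (u n) := by
        simp only [hw, map_smul]
      rw [hPw, norm_smul, norm_inv, norm_norm, ← div_eq_inv_mul]
      exact hu4 n
    have heE : ∀ n, w n - Pr (w n) ∈ E := fun n => hPE _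
    set ec : ℕ → E := fun n => ⟨w n - Pr (w n), heE n⟩ with hec
    have hball : ∀ n, ec n ∈ Metric.closedBall (0 : E) 1 := by
      intro n
      rw [Metric.mem_closedBall, dist_zero_right]
      show ‖(ec n : X)‖ ≤ 1
      rw [hne n]
    obtain ⟨l, hl, φ, hφ, htend⟩ :=
      (isCompact_closedBall (0 : E) 1).tendsto_subseq hball
    have htendX : Tendsto (fun n => (w (φ n) - Pr (w (φ n)))) atTop (𝓝 (l : X)) :=
      (continuous_subtype_val.tendsto l).comp htend
    have htendP : Tendsto (fun n => Pr (w (φ n))) atTop (𝓝 0) := by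
      refine squeeze_zero_norm (fun n => ?_) tendsto_one_div_add_atTop_nhds_zero_nat
      calc ‖Pr (w (φ n))‖ ≤ 1 / (φ n + 1) := (hnP (φ n)).le
        _ ≤ 1 / (n + 1) := by
            apply one_div_le_one_div_of_le (by positivity)
            have hn : n ≤ φ n := hφ.le_apply
            have : (n : ℝ) ≤ (φ n : ℝ) := Nat.cast_le.2 hn
            linarith
    have htendW : Tendsto (fun n => w (φ n)) atTop (𝓝 (l : X)) := by
      have := htendX.add htendP
      simpa using this
    have hlC : (l : X) ∈ C :=
      hclosed.mem_of_tendsto htendW (Eventually.of_forall fun n => hwC (φ n))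
    have hnorm1 : ‖(l : X)‖ = 1 := by
      have h1 : Tendsto (fun n => ‖w (φ n) - Pr (w (φ n))‖) atTop (𝓝 ‖(l : X)‖) :=
        htendX.norm
      have h2 : Tendsto (fun n => ‖w (φ n) - Pr (w (φ n))‖) atTop (𝓝 1) := by
        simp only [hne]; exact tendsto_const_nhds
      exact tendsto_nhds_unique h1 h2
    exact ⟨l, l.2, hlC, by intro h0; rw [h0, norm_zero] at hnorm1; norm_num at hnorm1⟩
  · rintro ⟨x, hxE, hxC, hxne⟩
    have hPx : Pr x = 0 := by
      have h1 : Pr x ∈ E := by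
        have := hPE x
        have : Pr x = x - (x - Pr x) := by abel
        rw [this]
        exact Submodule.sub_mem E hxE (hPE x)
      have h2 : Pr x ∈ F := hPF x
      have : Pr x ∈ E ⊓ F := ⟨h1, h2⟩
      rw [hcompl.inf_eq_bot] at this
      exact this
    have hterm : ENNReal.ofReal ‖Pr x‖ / ENNReal.ofReal ‖x - Pr x‖ = 0 := by
      rw [hPx, norm_zero, ENNReal.ofReal_zero]
      apply ENNReal.zero_div
    refine le_antisymm ?_ (zero_le)
    calc (⨅ (u : X) (_ : u ∈ C) (_ : u ≠ 0),
        ENNReal.ofReal ‖Pr u‖ / ENNReal.ofReal ‖u - Pr u‖)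
        ≤ ENNReal.ofReal ‖Pr x‖ / ENNReal.ofReal ‖x - Pr x‖ := by
          exact iInf_le_of_le x (iInf_le_of_le hxC (iInf_le _ hxne))
      _ = 0 := hterm
end
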